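/- arXiv:2507.22444 — 3 statements merged into one kernel-verified Lean document; each statement's English description precedes it below -/
import Mathlib

section
/- Let U be a finite set and {A_f}_{f∈F_U} a family of binary observables. Define the folded family A_{true,f} := m(f·s_U(f)) A_{s_U(f)} as above. If α ⊆ {±1}^U has even cardinality, then the Fourier coefficient Â_{true,α} := E_f[χ_α(f) A_{true,f}] equals 0. -/
open Matrix

/-- The Fourier coefficient `Â_α = E_f [χ_α(f) • A_f]`. -/
noncomputable def matFourierCoeff {U : Type*} [Fintype U] [DecidableEq U] {d : ℕ}
    (A : ((U → ℤˣ) → ℤˣ) → Matrix (Fin d) (Fin d) ℂ) (α : Finset (U → ℤˣ)) :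
    Matrix (Fin d) (Fin d) ℂ :=
  (Fintype.card ((U → ℤˣ) → ℤˣ) : ℂ)⁻¹ •
    ∑ g : (U → ℤˣ) → ℤˣ, (((∏ x ∈ α, g x : ℤˣ) : ℤ) : ℂ) • A g

/-- The section function `s_U`. -/
noncomputable def sectionFun {U : Type*} (f : (U → ℤˣ) → ℤˣ) : (U → ℤˣ) → ℤˣ :=
  if f (fun _ => 1) = 1 then f else -f

/-- The majority sign `m(g)`. -/
noncomputable def majSign {U : Type*} [Fintype U] [DecidableEq U]
    (g : (U → ℤˣ) → ℤˣ) : ℤˣ :=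
  if (Finset.univ.filter (fun x : U → ℤˣ => g x = -1)).card >
      (Finset.univ.filter (fun x : U → ℤˣ => g x = 1)).card then -1 else 1

/-! Since `f * s_U(f)` is the constant `f(1̄)`, the fold sign `m(f * s_U(f))` equals `f(1̄)`,
which is odd in `f`, while `s_U(-f) = s_U(f)`: so `A_{true}` is an odd function of `f`. For
`|α|` even, `χ_α` is even, hence the summand of the Fourier coefficient is odd and the sum
over the involution `f ↦ -f` vanishes. -/

lemma Finset.even_prod_apply_of_even_card {ι M : Type*} [CommMonoid M] [HasDistribNeg M]
    {s : Finset ι} (hs : Even s.card) : Function.Even fun g : ι → M => ∏ i ∈ s, g i := by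
  intro g
  simp only [Pi.neg_apply, Finset.prod_neg, hs.neg_one_pow, one_mul]

lemma sectionFun_neg {U : Type*} (f : (U → ℤˣ) → ℤˣ) :
    sectionFun (-f) = sectionFun f := by
  unfold sectionFun
  rcases Int.units_eq_one_or (f fun _ => 1) with h | h
  · simp [h]
  · simp [h, neg_units_ne_self (1 : ℤˣ)]

lemma mul_sectionFun {U : Type*} (f : (U → ℤˣ) → ℤˣ) :
    f * sectionFun f = fun _ => f fun _ => 1 := by
  funext x
  unfold sectionFun
  rcases Int.units_eq_one_or (f fun _ => 1) with h | h <;>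
    simp [h, neg_units_ne_self (1 : ℤˣ), Int.units_mul_self]

lemma majSign_const {U : Type*} [Fintype U] [DecidableEq U] (c : ℤˣ) :
    majSign (fun _ : U → ℤˣ => c) = c := by
  unfold majSign
  rcases Int.units_eq_one_or c with rfl | rfl
  · simp [units_ne_neg_self (1 : ℤˣ)]
  · simp [neg_units_ne_self (1 : ℤˣ)]

lemma majSign_mul_sectionFun {U : Type*} [Fintype U] [DecidableEq U] (f : (U → ℤˣ) → ℤˣ) :
    majSign (f * sectionFun f) = f fun _ => 1 := by
  rw [mul_sectionFun, majSign_const]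

lemma odd_majSign_mul_sectionFun_smul {U : Type*} [Fintype U] [DecidableEq U] {M : Type*}
    [AddCommGroup M] [Module ℂ M] (A : ((U → ℤˣ) → ℤˣ) → M) :
    Function.Odd fun f => ((majSign (f * sectionFun f) : ℤ) : ℂ) • A (sectionFun f) := by
  intro f
  dsimp only
  rw [majSign_mul_sectionFun, majSign_mul_sectionFun, sectionFun_neg, Pi.neg_apply,
    Units.val_neg, Int.cast_neg, neg_smul]

theorem stmt_4_general (U : Type*) [Fintype U] [DecidableEq U] (d : ℕ)
    (A : ((U → ℤˣ) → ℤˣ) → Matrix (Fin d) (Fin d) ℂ)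
    (α : Finset (U → ℤˣ)) (hα : Even α.card) :
    matFourierCoeff
      (fun f => ((majSign (f * sectionFun f) : ℤ) : ℂ) • A (sectionFun f)) α = 0 := by
  have hχ := (Finset.even_prod_apply_of_even_card (M := ℤˣ) hα).left_comp
    fun u : ℤˣ => ((u : ℤ) : ℂ)
  have := IsAddTorsionFree.of_module_rat (Matrix (Fin d) (Fin d) ℂ)
  rw [matFourierCoeff, smul_eq_zero]
  exact Or.inr (hχ.smul_odd (odd_majSign_mul_sectionFun_smul A)).sum_eq_zero

/-- if `α ⊆ {±1}^U` has even cardinality, then the Fourier coefficient of the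
folded family `A_{true,f} := m(f·s_U(f)) • A_{s_U(f)}` at `α` vanishes. -/
theorem stmt_4 (U : Type*) [Fintype U] [DecidableEq U] (d : ℕ)
    (A : ((U → ℤˣ) → ℤˣ) → Matrix (Fin d) (Fin d) ℂ)
    (hherm : ∀ f, (A f)ᴴ = A f) (hinv : ∀ f, A f * A f = 1)
    (α : Finset (U → ℤˣ)) (hα : Even α.card) :
    matFourierCoeff
      (fun f => ((majSign (f * sectionFun f) : ℤ) : ℂ) • A (sectionFun f)) α = 0 :=
  stmt_4_general U d A α hα
end

section
/- Let Y₁, Y₂, Y₃, X₁, X₂, X₃ be binary observables in the d×d complex matrices (Hermitian unitaries). Then |(1/d)·Tr(Y₁Y₂Y₃ − X₁X₂X₃)| ≤ (6·(3 − Σ_{l=1}^{3} (1/d)·Tr(Y_l X_l)))^{1/2}. -/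
/-!
Telescoping, `U₀U₁U₂ - V₀V₁V₂ = (U₀ - V₀)U₁U₂ + V₀(U₁ - V₁)U₂ + V₀V₁(U₂ - V₂)`. By cyclicity of
the normalized trace `τ` the `l`-th term has `τ((Uₗ - Vₗ) W)` with `W` unitary, so Cauchy–Schwarz
for the normalized Hilbert–Schmidt inner product bounds it by `‖Uₗ - Vₗ‖`. For binary observables
`‖Y - X‖² = 2 - 2 Re τ(YX)`, and `(a₀ + a₁ + a₂)² ≤ 3 (a₀² + a₁² + a₂²)` concludes.
-/

open Matrix

open scoped ComplexOrder

namespace Matrix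

variable {n 𝕜 : Type*} [Fintype n] [RCLike 𝕜]

noncomputable def normalizedTrace (A : Matrix n n 𝕜) : 𝕜 := (Fintype.card n : 𝕜)⁻¹ * A.trace

noncomputable def hsNorm (A : Matrix n n 𝕜) : ℝ := √(RCLike.re (normalizedTrace (Aᴴ * A)))

theorem re_normalizedTrace (A : Matrix n n 𝕜) :
    RCLike.re (normalizedTrace A) = (Fintype.card n : ℝ)⁻¹ * RCLike.re A.trace := by
  simpa [normalizedTrace] using RCLike.re_ofReal_mul (K := 𝕜) (Fintype.card n : ℝ)⁻¹ A.trace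

theorem hsNorm_sq (A : Matrix n n 𝕜) : hsNorm A ^ 2 = RCLike.re (normalizedTrace (Aᴴ * A)) := by
  refine Real.sq_sqrt ?_
  rw [re_normalizedTrace]
  exact mul_nonneg (by positivity)
    (RCLike.nonneg_iff.mp (posSemidef_conjTranspose_mul_self A).trace_nonneg).1

-- `⟪A, B⟫ = tr (B Aᴴ)` is the inner product `toMatrixInnerProductSpace` attaches to the matrix `1`.
theorem norm_trace_mul_le (A B : Matrix n n 𝕜) :
    ‖(A * B).trace‖ ≤ √(RCLike.re (Aᴴ * A).trace) * √(RCLike.re (Bᴴ * B).trace) := by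
  classical
  let := toMatrixSeminormedAddCommGroup (1 : Matrix n n 𝕜) PosSemidef.one
  let := toMatrixInnerProductSpace (1 : Matrix n n 𝕜) PosSemidef.one
  have h_inner : inner 𝕜 Aᴴ B = (A * B).trace := by
    change (B * 1 * Aᴴᴴ).trace = _
    rw [mul_one, conjTranspose_conjTranspose, trace_mul_comm]
  have h_norm (C : Matrix n n 𝕜) : ‖C‖ = √(RCLike.re (C * Cᴴ).trace) := by
    change √(RCLike.re (C * 1 * Cᴴ).trace) = _
    rw [mul_one]
  have := norm_inner_le_norm (𝕜 := 𝕜) Aᴴ B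
  rwa [h_inner, h_norm, h_norm, conjTranspose_conjTranspose, trace_mul_comm B] at this

theorem norm_normalizedTrace_mul_le (A B : Matrix n n 𝕜) :
    ‖normalizedTrace (A * B)‖ ≤ hsNorm A * hsNorm B := by
  have hc : 0 ≤ (Fintype.card n : ℝ)⁻¹ := by positivity
  calc ‖normalizedTrace (A * B)‖ = (Fintype.card n : ℝ)⁻¹ * ‖(A * B).trace‖ := by
        simp [normalizedTrace]
    _ ≤ (Fintype.card n : ℝ)⁻¹ * (√(RCLike.re (Aᴴ * A).trace) * √(RCLike.re (Bᴴ * B).trace)) := by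
        gcongr; exact norm_trace_mul_le A B
    _ = hsNorm A * hsNorm B := by
        rw [hsNorm, hsNorm, re_normalizedTrace, re_normalizedTrace, Real.sqrt_mul hc,
          Real.sqrt_mul hc, mul_mul_mul_comm, Real.mul_self_sqrt hc]

variable [DecidableEq n]

theorem hsNorm_le_one_of_mem_unitary {U : Matrix n n 𝕜} (hU : U ∈ unitary (Matrix n n 𝕜)) :
    hsNorm U ≤ 1 := by
  rw [hsNorm, ← star_eq_conjTranspose, Unitary.star_mul_self_of_mem hU, re_normalizedTrace,
    trace_one, RCLike.natCast_re]
  exact Real.sqrt_le_one.mpr (inv_mul_le_one_of_le₀ le_rfl (by positivity))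

theorem norm_normalizedTrace_mul_sub_mul_le {U₀ U₁ U₂ V₀ V₁ V₂ : Matrix n n 𝕜}
    (hU₁ : U₁ ∈ unitary (Matrix n n 𝕜)) (hU₂ : U₂ ∈ unitary (Matrix n n 𝕜))
    (hV₀ : V₀ ∈ unitary (Matrix n n 𝕜)) (hV₁ : V₁ ∈ unitary (Matrix n n 𝕜)) :
    ‖normalizedTrace (U₀ * U₁ * U₂ - V₀ * V₁ * V₂)‖ ≤
      hsNorm (U₀ - V₀) + hsNorm (U₁ - V₁) + hsNorm (U₂ - V₂) := by
  have h_bound (A U : Matrix n n 𝕜) (hU : U ∈ unitary (Matrix n n 𝕜)) :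
      ‖normalizedTrace (A * U)‖ ≤ hsNorm A :=
    (norm_normalizedTrace_mul_le A U).trans
      (mul_le_of_le_one_right (Real.sqrt_nonneg _) (hsNorm_le_one_of_mem_unitary hU))
  have h_split : normalizedTrace (U₀ * U₁ * U₂ - V₀ * V₁ * V₂) =
      normalizedTrace ((U₀ - V₀) * (U₁ * U₂)) + normalizedTrace ((U₁ - V₁) * (U₂ * V₀)) +
        normalizedTrace ((U₂ - V₂) * (V₀ * V₁)) := by
    have h_tele : U₀ * U₁ * U₂ - V₀ * V₁ * V₂ =
        (U₀ - V₀) * (U₁ * U₂) + V₀ * ((U₁ - V₁) * U₂) + (V₀ * V₁) * (U₂ - V₂) := by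
      noncomm_ring
    rw [h_tele, normalizedTrace, trace_add, trace_add, trace_mul_comm V₀, mul_assoc (U₁ - V₁),
      trace_mul_comm (V₀ * V₁)]
    simp only [normalizedTrace, mul_add]
  rw [h_split]
  refine norm_add₃_le.trans (add_le_add_three ?_ ?_ ?_)
  · exact h_bound _ _ (mul_mem hU₁ hU₂)
  · exact h_bound _ _ (mul_mem hU₂ hV₀)
  · exact h_bound _ _ (mul_mem hV₀ hV₁)

def IsBinaryObservable (A : Matrix n n 𝕜) : Prop := A.IsHermitian ∧ A * A = 1

namespace IsBinaryObservable

variable {X Y : Matrix n n 𝕜}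

theorem mem_unitary (hY : IsBinaryObservable Y) : Y ∈ unitary (Matrix n n 𝕜) := by
  rw [Unitary.mem_iff, star_eq_conjTranspose, hY.1.eq, and_self]
  exact hY.2

theorem trace_conjTranspose_sub_mul_sub (hY : IsBinaryObservable Y) (hX : IsBinaryObservable X) :
    ((Y - X)ᴴ * (Y - X)).trace = 2 * Fintype.card n - 2 * (Y * X).trace := by
  have h_expand : (Y - X) * (Y - X) = Y * Y + X * X - Y * X - X * Y := by noncomm_ring
  rw [conjTranspose_sub, hY.1.eq, hX.1.eq, h_expand, hY.2, hX.2, trace_sub, trace_sub, trace_add,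
    trace_one, trace_mul_comm X]
  ring

theorem hsNorm_sub_sq [Nonempty n] (hY : IsBinaryObservable Y) (hX : IsBinaryObservable X) :
    hsNorm (Y - X) ^ 2 = 2 - 2 * RCLike.re (normalizedTrace (Y * X)) := by
  rw [hsNorm_sq, re_normalizedTrace, re_normalizedTrace, hY.trace_conjTranspose_sub_mul_sub hX]
  have : (Fintype.card n : ℝ) ≠ 0 := by positivity
  simp only [map_sub, RCLike.mul_re, RCLike.ofNat_re, RCLike.natCast_re, RCLike.ofNat_im,
    RCLike.natCast_im, mul_zero, zero_mul, sub_zero]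
  field_simp

end IsBinaryObservable

end Matrix

/-- for binary observables `Y₁,Y₂,Y₃,X₁,X₂,X₃ ∈ M_d(ℂ)`,
`|(1/d)·Tr(Y₁Y₂Y₃ − X₁X₂X₃)| ≤ (6 (3 − Σ_l (1/d)·Tr(Y_l X_l)))^{1/2}`. -/
theorem stmt_6 (d : ℕ) (Y X : Fin 3 → Matrix (Fin d) (Fin d) ℂ)
    (hY : ∀ l, (Y l)ᴴ = Y l ∧ Y l * Y l = 1)
    (hX : ∀ l, (X l)ᴴ = X l ∧ X l * X l = 1) :
    ‖(1 / (d : ℂ)) * (Y 0 * Y 1 * Y 2 - X 0 * X 1 * X 2).trace‖ ≤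
      Real.sqrt (6 * (3 - ∑ l, ((1 / (d : ℂ)) * (Y l * X l).trace).re)) := by
  rcases Nat.eq_zero_or_pos d with rfl | hd
  · simp
  have : Nonempty (Fin d) := Fin.pos_iff_nonempty.mp hd
  have hY' : ∀ l, IsBinaryObservable (Y l) := hY
  have hX' : ∀ l, IsBinaryObservable (X l) := hX
  have h_ntr (A : Matrix (Fin d) (Fin d) ℂ) : 1 / (d : ℂ) * A.trace = normalizedTrace A := by
    simp [normalizedTrace]
  simp only [h_ntr]
  calc ‖normalizedTrace (Y 0 * Y 1 * Y 2 - X 0 * X 1 * X 2)‖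
      ≤ ∑ l, hsNorm (Y l - X l) := by
        rw [Fin.sum_univ_three]
        exact norm_normalizedTrace_mul_sub_mul_le (hY' 1).mem_unitary (hY' 2).mem_unitary
          (hX' 0).mem_unitary (hX' 1).mem_unitary
    _ ≤ √(3 * ∑ l, hsNorm (Y l - X l) ^ 2) :=
        Real.le_sqrt_of_sq_le <| by
          simpa using sq_sum_le_card_mul_sum_sq (s := .univ) (f := fun l ↦ hsNorm (Y l - X l))
    _ = _ := by
        simp only [fun l ↦ (hY' l).hsNorm_sub_sq (hX' l), Fin.sum_univ_three,
          RCLike.re_to_complex]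
        congr 1
        ring
end

section
/- Let G be a synchronous nonlocal game admitting a perfect oracularizable synchronous strategy, i.e., a synchronous PVM strategy {A^x_a} on the maximally entangled state with winning probability 1 such that A^x_a and A^y_b commute for all (x,y) in the support of the question distribution. Then the projection game G^proj also admits a perfect synchronous strategy, given by Alice measuring with A^{xy}_{ab} := A^x_a A^y_b on pair questions and Bob measuring with A^x_a on single questions. -/
open Matrix

/-- A (two-player, one-round) nonlocal game. -/
structure NonlocalGame (IA IB OA OB : Type) where
  prob : IA → IB → ℝ
  D : IA → IB → OA → OB → Bool

/-- `p` is a probability distribution on question pairs. -/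
def IsDist {IA IB : Type} [Fintype IA] [Fintype IB] (p : IA → IB → ℝ) : Prop :=
  (∀ x y, 0 ≤ p x y) ∧ ∑ x, ∑ y, p x y = 1

/-- A PVM: orthogonal projections summing to the identity. -/
def IsPVM {d : ℕ} {O : Type} [Fintype O] (A : O → Matrix (Fin d) (Fin d) ℂ) : Prop :=
  (∀ a, (A a)ᴴ = A a ∧ A a * A a = A a) ∧ ∑ a, A a = 1

/-- The winning probability of the synchronous strategy on `ℂ^d` with correlations
`p(a,b|x,y) = (1/d)Tr(A^x_a B^y_b)` (maximally entangled state, Bob's PVMs being the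
transposes of `B`). -/
noncomputable def syncWinProb {IA IB OA OB : Type}
    [Fintype IA] [Fintype IB] [Fintype OA] [Fintype OB]
    (G : NonlocalGame IA IB OA OB) (d : ℕ)
    (A : IA → OA → Matrix (Fin d) (Fin d) ℂ)
    (B : IB → OB → Matrix (Fin d) (Fin d) ℂ) : ℝ :=
  ∑ x, ∑ y, G.prob x y *
    ∑ a, ∑ b, if G.D x y a b then (A x a * B y b).trace.re / d else 0

/-- The projection game `G^proj`. -/
noncomputable def projGame {I O : Type} [DecidableEq I] [DecidableEq O]
    (G : NonlocalGame I I O O) : NonlocalGame (I × I) (I × Bool) (O × O) O where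
  prob := fun q z =>
    if z.1 = (if z.2 then q.2 else q.1) then G.prob q.1 q.2 / 2 else 0
  D := fun q z a c =>
    G.D q.1 q.2 a.1 a.2 && decide (z.1 = if z.2 then q.2 else q.1) &&
      decide (c = if z.2 then a.2 else a.1)

/-! The product of commuting projections is a projection, which makes `A^{xy}_{ab}` a PVM. In
`G^proj`, Bob's answer is checked against one of Alice's, so each winning event contributes
`Tr(A^x_a A^y_b A^x_a)` or `Tr(A^x_a A^y_b A^y_b)`; by cyclicity of the trace and idempotence
both equal `Tr(A^x_a A^y_b)`, and averaging over Bob's two possible questions gives exactly the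
winning probability of `G`. -/

lemma isPVM_iff {d : ℕ} {O : Type} [Fintype O] (A : O → Matrix (Fin d) (Fin d) ℂ) :
    IsPVM A ↔ (∀ a, IsStarProjection (A a)) ∧ ∑ a, A a = 1 := by
  simp only [IsPVM, isStarProjection_iff', star_eq_conjTranspose, and_comm]

lemma IsPVM.isIdempotentElem {d : ℕ} {O : Type} [Fintype O] {A : O → Matrix (Fin d) (Fin d) ℂ}
    (hA : IsPVM A) (a : O) : IsIdempotentElem (A a) :=
  (hA.1 a).2

lemma IsPVM.mul_of_commute {d : ℕ} {O O' : Type} [Fintype O] [Fintype O']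
    {P : O → Matrix (Fin d) (Fin d) ℂ} {Q : O' → Matrix (Fin d) (Fin d) ℂ}
    (hP : IsPVM P) (hQ : IsPVM Q) (hPQ : ∀ a b, Commute (P a) (Q b)) :
    IsPVM (fun ab : O × O' => P ab.1 * Q ab.2) := by
  rw [isPVM_iff] at hP hQ ⊢
  refine ⟨fun ab => (hP.1 ab.1).mul (hQ.1 ab.2) (hPQ ab.1 ab.2), ?_⟩
  rw [Fintype.sum_prod_type, ← Finset.sum_mul_sum, hP.2, hQ.2, one_mul]

lemma IsIdempotentElem.trace_mul_mul_self {n R : Type*} [Fintype n] [CommSemiring R]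
    {p : Matrix n n R} (hp : IsIdempotentElem p) (q : Matrix n n R) :
    trace (p * q * p) = trace (p * q) := by
  rw [trace_mul_cycle, hp.eq]

lemma projGame_prob {I O : Type} [DecidableEq I] [DecidableEq O] (G : NonlocalGame I I O O)
    (q : I × I) (z : I × Bool) :
    (projGame G).prob q z = if z.1 = (if z.2 then q.2 else q.1) then G.prob q.1 q.2 / 2 else 0 :=
  rfl

section ProjGame

variable {I O : Type} [DecidableEq I] [Fintype O] [DecidableEq O]
  (G : NonlocalGame I I O O) (d : ℕ) {A : I → O → Matrix (Fin d) (Fin d) ℂ}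

lemma projGame_inner_sum (hA : ∀ x a, IsIdempotentElem (A x a)) (x y : I) (β : Bool) :
    (∑ ab : O × O, ∑ c,
      if (projGame G).D (x, y) (if β then y else x, β) ab c then
        (A x ab.1 * A y ab.2 * A (if β then y else x) c).trace.re / d else 0) =
      ∑ a, ∑ b, if G.D x y a b then (A x a * A y b).trace.re / d else 0 := by
  rw [Fintype.sum_prod_type]
  refine Finset.sum_congr rfl fun a _ => Finset.sum_congr rfl fun b _ => ?_
  by_cases hD : G.D x y a b
  · cases β
    · simp [projGame, hD, (hA x a).trace_mul_mul_self]
    · simp [projGame, hD, mul_assoc, (hA y b).eq]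
  · simp [projGame, hD]

lemma projGame_question_sum [Fintype I] (hA : ∀ x a, IsIdempotentElem (A x a)) (x y : I) :
    (∑ z : I × Bool, (projGame G).prob (x, y) z *
      ∑ ab : O × O, ∑ c, if (projGame G).D (x, y) z ab c then
        (A x ab.1 * A y ab.2 * A z.1 c).trace.re / d else 0) =
      G.prob x y * ∑ a, ∑ b, if G.D x y a b then (A x a * A y b).trace.re / d else 0 := by
  rw [Fintype.sum_prod_type, Finset.sum_comm]
  simp only [projGame_prob, ite_mul, zero_mul, Finset.sum_ite_eq', Finset.mem_univ, if_true,
    projGame_inner_sum G d hA, Fintype.sum_bool]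
  ring

lemma syncWinProb_projGame [Fintype I] (hA : ∀ x a, IsIdempotentElem (A x a)) :
    syncWinProb (projGame G) d (fun q ab => A q.1 ab.1 * A q.2 ab.2) (fun z c => A z.1 c) =
      syncWinProb G d A A := by
  unfold syncWinProb
  rw [Fintype.sum_prod_type]
  exact Finset.sum_congr rfl fun x _ => Finset.sum_congr rfl fun y _ =>
    projGame_question_sum G d hA x y

end ProjGame

theorem stmt_14_general {I O : Type} [Fintype I] [DecidableEq I] [Fintype O] [DecidableEq O]
    (G : NonlocalGame I I O O)
    (d : ℕ) (A : I → O → Matrix (Fin d) (Fin d) ℂ)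
    (hPVM : ∀ x, IsPVM (A x))
    (hcomm : ∀ x y, 0 < G.prob x y → ∀ a b, A x a * A y b = A y b * A x a)
    (hperf : syncWinProb G d A A = 1) :
    (∀ x y, 0 < G.prob x y → IsPVM (fun ab : O × O => A x ab.1 * A y ab.2)) ∧
      syncWinProb (projGame G) d
        (fun q ab => A q.1 ab.1 * A q.2 ab.2) (fun z c => A z.1 c) = 1 :=
  ⟨fun x y hp => (hPVM x).mul_of_commute (hPVM y) (hcomm x y hp),
    (syncWinProb_projGame G d fun x => (hPVM x).isIdempotentElem).trans hperf⟩

/-- if a synchronous game `G` admits a perfect oracularizable synchronous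
strategy `{A^x_a}`, then `G^proj` admits a perfect synchronous strategy, given by Alice
measuring with `A^{xy}_{ab} := A^x_a A^y_b` on pair questions and Bob measuring with
`A^x_a` on single questions. -/
theorem stmt_14 {I O : Type} [Fintype I] [DecidableEq I] [Fintype O] [DecidableEq O]
    (G : NonlocalGame I I O O) (hdist : IsDist G.prob)
    (hsymm : ∀ x y, G.prob x y = G.prob y x)
    (hsync : ∀ x (a b : O), a ≠ b → G.D x x a b = false)
    (d : ℕ) (hd : 0 < d) (A : I → O → Matrix (Fin d) (Fin d) ℂ)
    (hPVM : ∀ x, IsPVM (A x))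
    (hcomm : ∀ x y, 0 < G.prob x y → ∀ a b, A x a * A y b = A y b * A x a)
    (hperf : syncWinProb G d A A = 1) :
    (∀ x y, 0 < G.prob x y → IsPVM (fun ab : O × O => A x ab.1 * A y ab.2)) ∧
      syncWinProb (projGame G) d
        (fun q ab => A q.1 ab.1 * A q.2 ab.2) (fun z c => A z.1 c) = 1 :=
  stmt_14_general G d A hPVM hcomm hperf
end
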